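/- arXiv:2105.02299 — 3 statements merged into one kernel-verified Lean document; each statement's English description precedes it below -/
import Mathlib

section
/- The function k ↦ 2E(k) − K(k) is strictly decreasing on (0,1), is positive for small k, and has a unique zero k* in (1/√2, 1). -/
open Real

/-- The complete elliptic integral of the first kind. -/
noncomputable def ellK (k : ℝ) : ℝ :=
  ∫ θ in (0:ℝ)..(π / 2), 1 / Real.sqrt (1 - k ^ 2 * Real.sin θ ^ 2)

/-- The complete elliptic integral of the second kind. -/
noncomputable def ellE (k : ℝ) : ℝ :=
  ∫ θ in (0:ℝ)..(π / 2), Real.sqrt (1 - k ^ 2 * Real.sin θ ^ 2)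

open intervalIntegral

lemma upos {k : ℝ} (hk : k^2 < 1) (θ : ℝ) : 0 < 1 - k^2 * sin θ^2 := by
  nlinarith [sin_sq_le_one θ, sq_nonneg k, sq_nonneg (sin θ)]

lemma contU (k : ℝ) : Continuous fun θ : ℝ => 1 - k^2 * sin θ^2 := by fun_prop

lemma contSqrt {k : ℝ} : Continuous fun θ : ℝ => Real.sqrt (1 - k^2 * sin θ^2) := by fun_prop

lemma contInv {k : ℝ} (hk : k^2 < 1) :
    Continuous fun θ : ℝ => 1 / Real.sqrt (1 - k^2 * sin θ^2) := by
  apply Continuous.div continuous_const contSqrt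
  intro θ
  exact ne_of_gt (Real.sqrt_pos.2 (upos hk θ))

lemma intInv {k : ℝ} (hk : k^2 < 1) (a b : ℝ) :
    IntervalIntegrable (fun θ : ℝ => 1 / Real.sqrt (1 - k^2 * sin θ^2)) MeasureTheory.volume a b :=
  (contInv hk).intervalIntegrable a b

lemma intSqrt (k : ℝ) (a b : ℝ) :
    IntervalIntegrable (fun θ : ℝ => Real.sqrt (1 - k^2 * sin θ^2)) MeasureTheory.volume a b :=
  contSqrt.intervalIntegrable a b

lemma fint {k : ℝ} (hk : k^2 < 1) :
    2 * ellE k - ellK k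
      = ∫ θ in (0:ℝ)..(π/2),
          (2 * Real.sqrt (1 - k^2 * sin θ^2) - 1 / Real.sqrt (1 - k^2 * sin θ^2)) := by
  rw [intervalIntegral.integral_sub ((intSqrt k 0 (π/2)).const_mul 2) (intInv hk 0 (π/2)),
    intervalIntegral.integral_const_mul]
  rfl

lemma hmono {u v : ℝ} (hu : 0 < u) (huv : u < v) :
    2 * Real.sqrt u - 1 / Real.sqrt u < 2 * Real.sqrt v - 1 / Real.sqrt v := by
  have h1 : Real.sqrt u < Real.sqrt v := Real.sqrt_lt_sqrt hu.le huv
  have h2 : 1 / Real.sqrt v ≤ 1 / Real.sqrt u :=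
    one_div_le_one_div_of_le (Real.sqrt_pos.2 hu) h1.le
  linarith

lemma fanti : StrictAntiOn (fun k : ℝ => 2 * ellE k - ellK k) (Set.Ioo 0 1) := by
  rintro a ⟨ha0, ha1⟩ b ⟨hb0, hb1⟩ hab
  have ha2 : a^2 < 1 := by nlinarith
  have hb2 : b^2 < 1 := by nlinarith
  simp only
  rw [fint ha2, fint hb2]
  have hint := ((intSqrt a 0 (π/2)).const_mul 2).sub (intInv ha2 0 (π/2))
  have hintb := ((intSqrt b 0 (π/2)).const_mul 2).sub (intInv hb2 0 (π/2))
  have key : (0:ℝ) < ∫ θ in (0:ℝ)..(π/2),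
      ((2 * Real.sqrt (1 - a^2 * sin θ^2) - 1 / Real.sqrt (1 - a^2 * sin θ^2))
        - (2 * Real.sqrt (1 - b^2 * sin θ^2) - 1 / Real.sqrt (1 - b^2 * sin θ^2))) := by
    apply intervalIntegral.intervalIntegral_pos_of_pos_on (hint.sub hintb)
    · intro θ hθ
      have hs : 0 < sin θ := Real.sin_pos_of_pos_of_lt_pi hθ.1 (by linarith [hθ.2, pi_pos])
      have hab2 : a^2 < b^2 := by nlinarith
      have hlt : 1 - b^2 * sin θ^2 < 1 - a^2 * sin θ^2 := by
        nlinarith [mul_pos (sub_pos.2 hab2) (mul_pos hs hs)]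
      have := hmono (upos hb2 θ) hlt
      linarith
    · positivity
  rw [intervalIntegral.integral_sub hint hintb] at key
  linarith

lemma fpos {k : ℝ} (hk : k^2 ≤ 1/2) : 0 < 2 * ellE k - ellK k := by
  have hk1 : k^2 < 1 := by linarith
  rw [fint hk1]
  apply intervalIntegral.intervalIntegral_pos_of_pos_on
    (((intSqrt k 0 (π/2)).const_mul 2).sub (intInv hk1 0 (π/2)))
  · intro θ hθ
    have hs1 : sin θ < 1 := by
      have := Real.sin_lt_sin_of_lt_of_le_pi_div_two (x := θ) (y := π/2)
        (by linarith [hθ.1, pi_pos]) le_rfl hθ.2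
      rwa [Real.sin_pi_div_two] at this
    have hs0 : 0 ≤ sin θ := Real.sin_nonneg_of_nonneg_of_le_pi hθ.1.le
      (by linarith [hθ.2, pi_pos])
    have hu : 1/2 < 1 - k^2 * sin θ^2 := by nlinarith [sq_nonneg k]
    set u := 1 - k^2 * sin θ^2 with hudef
    have hsu : 0 < Real.sqrt u := Real.sqrt_pos.2 (by linarith)
    have hmul : Real.sqrt u * Real.sqrt u = u := Real.mul_self_sqrt (by linarith)
    have : 1 / Real.sqrt u < 2 * Real.sqrt u := by
      rw [div_lt_iff₀ hsu]; nlinarith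
    linarith
  · positivity

noncomputable def kz : ℝ := Real.sqrt (1 - (1/2:ℝ)^18)

lemma kz_sq : kz^2 = 1 - (1/2:ℝ)^18 := Real.sq_sqrt (by norm_num)

lemma kz_sq_lt : kz^2 < 1 := by rw [kz_sq]; norm_num

noncomputable def aseq : ℕ → ℝ := fun i => π/2 - (1/2)^i

lemma piece (i : ℕ) (hi : i ≤ 9) :
    Real.sqrt 2 / 4 ≤ ∫ θ in (aseq i)..(aseq (i+1)), 1 / Real.sqrt (1 - kz^2 * sin θ^2) := by
  set t : ℝ := (1/2:ℝ)^i with ht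
  have ht0 : 0 < t := by positivity
  have ht1 : t ≤ 1 := by
    rw [ht]; exact pow_le_one₀ (by norm_num) (by norm_num)
  have hab : aseq i ≤ aseq (i+1) := by
    simp only [aseq, pow_succ]; nlinarith
  have hconst : ∀ θ ∈ Set.Icc (aseq i) (aseq (i+1)),
      1 / (Real.sqrt 2 * t) ≤ 1 / Real.sqrt (1 - kz^2 * sin θ^2) := by
    intro θ hθ
    have hθ1 : π/2 - t ≤ θ := by
      have h := hθ.1; unfold aseq at h; rw [← ht] at h; exact h
    have hθ2 : θ ≤ π/2 - t/2 := by
      have := hθ.2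
      simp only [aseq, pow_succ] at this
      linarith
    have hcos0 : 0 ≤ cos θ := Real.cos_nonneg_of_mem_Icc ⟨by linarith [Real.pi_gt_three], by linarith⟩
    have hcos1 : cos θ ≤ π/2 - θ := by
      have := Real.sin_le (x := π/2 - θ) (by linarith)
      rwa [Real.sin_pi_div_two_sub] at this
    have hsin1 : sin θ^2 ≤ 1 := Real.sin_sq_le_one θ
    have hpow : ((1:ℝ)/2)^18 ≤ t^2 := by
      rw [ht, ← pow_mul]
      exact pow_le_pow_of_le_one (by norm_num) (by norm_num) (by omega)
    have hu : 1 - kz^2 * sin θ^2 ≤ 2 * t^2 := by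
      rw [kz_sq]
      have hpyth : sin θ^2 + cos θ^2 = 1 := Real.sin_sq_add_cos_sq θ
      nlinarith [sq_nonneg (sin θ)]
    have hupos : 0 < 1 - kz^2 * sin θ^2 := upos kz_sq_lt θ
    have hsq : Real.sqrt (1 - kz^2 * sin θ^2) ≤ Real.sqrt 2 * t := by
      have : Real.sqrt (1 - kz^2 * sin θ^2) ≤ Real.sqrt (2 * t^2) :=
        Real.sqrt_le_sqrt hu
      rwa [show (2:ℝ) * t^2 = 2 * t^2 from rfl, Real.sqrt_mul (by norm_num),
        Real.sqrt_sq ht0.le] at this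
    exact one_div_le_one_div_of_le (Real.sqrt_pos.2 hupos) hsq
  have := intervalIntegral.integral_mono_on hab
    ((continuous_const : Continuous fun _ : ℝ => 1 / (Real.sqrt 2 * t)).intervalIntegrable _ _)
    (intInv kz_sq_lt _ _) hconst
  rw [intervalIntegral.integral_const] at this
  have hlen : aseq (i+1) - aseq i = t/2 := by
    simp only [aseq, pow_succ, ht]; ring
  rw [hlen] at this
  have hs2 : (0:ℝ) < Real.sqrt 2 := Real.sqrt_pos.2 (by norm_num)
  have heq : (t/2) • (1 / (Real.sqrt 2 * t)) = Real.sqrt 2 / 4 := by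
    rw [smul_eq_mul]
    have h22 : Real.sqrt 2 * Real.sqrt 2 = 2 := Real.mul_self_sqrt (by norm_num)
    field_simp
    nlinarith
  rwa [heq] at this

lemma Kkz_lower : 10 * (Real.sqrt 2 / 4) ≤ ellK kz := by
  have hnn : ∀ θ : ℝ, 0 ≤ 1 / Real.sqrt (1 - kz^2 * sin θ^2) := by
    intro θ; positivity
  have hsum : ∑ i ∈ Finset.range 10,
      ∫ θ in (aseq i)..(aseq (i+1)), 1 / Real.sqrt (1 - kz^2 * sin θ^2)
      = ∫ θ in (aseq 0)..(aseq 10), 1 / Real.sqrt (1 - kz^2 * sin θ^2) :=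
    intervalIntegral.sum_integral_adjacent_intervals (fun i _ => intInv kz_sq_lt _ _)
  have hterm : 10 * (Real.sqrt 2 / 4) ≤ ∑ i ∈ Finset.range 10,
      ∫ θ in (aseq i)..(aseq (i+1)), 1 / Real.sqrt (1 - kz^2 * sin θ^2) := by
    have := Finset.sum_le_sum (f := fun _ : ℕ => Real.sqrt 2 / 4)
      (g := fun i : ℕ => ∫ θ in (aseq i)..(aseq (i+1)), 1 / Real.sqrt (1 - kz^2 * sin θ^2))
      (s := Finset.range 10) (fun i hi => piece i (by
        simp only [Finset.mem_range] at hi; omega))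
    simpa using this
  have h0 : (0:ℝ) ≤ aseq 0 := by
    simp only [aseq, pow_zero]; linarith [Real.pi_gt_three]
  have h10 : aseq 10 ≤ π/2 := by
    simp only [aseq]
    nlinarith [pow_pos (show (0:ℝ) < 1/2 by norm_num) 10]
  have h010 : aseq 0 ≤ aseq 10 := by
    simp only [aseq, pow_zero]
    nlinarith [pow_le_one₀ (show (0:ℝ) ≤ 1/2 by norm_num) (show (1/2:ℝ) ≤ 1 by norm_num) (n := 10)]
  have hsplit1 : ellK kz = (∫ θ in (0:ℝ)..(aseq 0), 1 / Real.sqrt (1 - kz^2 * sin θ^2))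
      + ∫ θ in (aseq 0)..(π/2), 1 / Real.sqrt (1 - kz^2 * sin θ^2) :=
    (intervalIntegral.integral_add_adjacent_intervals (intInv kz_sq_lt _ _)
      (intInv kz_sq_lt _ _)).symm
  have hsplit2 : (∫ θ in (aseq 0)..(π/2), 1 / Real.sqrt (1 - kz^2 * sin θ^2))
      = (∫ θ in (aseq 0)..(aseq 10), 1 / Real.sqrt (1 - kz^2 * sin θ^2))
      + ∫ θ in (aseq 10)..(π/2), 1 / Real.sqrt (1 - kz^2 * sin θ^2) :=
    (intervalIntegral.integral_add_adjacent_intervals (intInv kz_sq_lt _ _)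
      (intInv kz_sq_lt _ _)).symm
  have hnn1 : 0 ≤ ∫ θ in (0:ℝ)..(aseq 0), 1 / Real.sqrt (1 - kz^2 * sin θ^2) :=
    intervalIntegral.integral_nonneg h0 (fun θ _ => hnn θ)
  have hnn2 : 0 ≤ ∫ θ in (aseq 10)..(π/2), 1 / Real.sqrt (1 - kz^2 * sin θ^2) :=
    intervalIntegral.integral_nonneg h10 (fun θ _ => hnn θ)
  rw [hsplit1, hsplit2]
  rw [hsum] at hterm
  linarith

lemma ellE_le (k : ℝ) : ellE k ≤ π/2 := by
  have := intervalIntegral.integral_mono_on (a := 0) (b := π/2) (by positivity)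
    (intSqrt k 0 (π/2))
    ((continuous_const : Continuous fun _ : ℝ => (1:ℝ)).intervalIntegrable _ _)
    (fun θ _ => Real.sqrt_le_one.2 (by nlinarith [sq_nonneg (k * sin θ)]))
  rw [intervalIntegral.integral_const] at this
  simpa [ellE] using this

lemma fneg : 2 * ellE kz - ellK kz < 0 := by
  have h1 := Kkz_lower
  have h2 := ellE_le kz
  have hs : (1.4:ℝ) < Real.sqrt 2 := by
    rw [show (1.4:ℝ) = Real.sqrt (1.4^2) from (Real.sqrt_sq (by norm_num)).symm]
    exact Real.sqrt_lt_sqrt (by norm_num) (by norm_num)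
  have hpi : π < 3.15 := by linarith [Real.pi_lt_d2]
  nlinarith

lemma kz_lt_one : kz < 1 := by
  rw [kz, show (1:ℝ) = Real.sqrt 1 from Real.sqrt_one.symm]
  exact Real.sqrt_lt_sqrt (by norm_num) (by norm_num)

lemma s_lt_kz : 1 / Real.sqrt 2 < kz := by
  have h2 : (0:ℝ) < Real.sqrt 2 := Real.sqrt_pos.2 (by norm_num)
  rw [kz]
  rw [Real.lt_sqrt (by positivity)]
  rw [div_pow, one_pow, Real.sq_sqrt (by norm_num : (0:ℝ) ≤ 2)]
  norm_num

lemma s_pos : (0:ℝ) < 1 / Real.sqrt 2 := by positivity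

lemma s_sq : (1 / Real.sqrt 2)^2 = 1/2 := by
  rw [div_pow, one_pow, Real.sq_sqrt (by norm_num : (0:ℝ) ≤ 2)]

lemma fcont : ContinuousOn (fun k : ℝ => 2 * ellE k - ellK k)
    (Set.Icc (1 / Real.sqrt 2) kz) := by
  set s := 1 / Real.sqrt 2
  rw [continuousOn_iff_continuous_restrict]
  have hsq : ∀ x : Set.Icc s kz, (x:ℝ)^2 < 1 := by
    rintro ⟨x, hx1, hx2⟩
    have h0 : 0 ≤ x := le_trans s_pos.le hx1
    have : x^2 ≤ kz^2 := by nlinarith [le_trans h0 hx2]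
    exact lt_of_le_of_lt this kz_sq_lt
  have key : Continuous fun x : Set.Icc s kz =>
      ∫ θ in (0:ℝ)..(π/2),
        (2 * Real.sqrt (1 - (x:ℝ)^2 * sin θ^2) - 1 / Real.sqrt (1 - (x:ℝ)^2 * sin θ^2)) := by
    apply intervalIntegral.continuous_parametric_intervalIntegral_of_continuous'
    have hc : Continuous fun p : Set.Icc s kz × ℝ => 1 - ((p.1:ℝ))^2 * sin p.2^2 := by
      fun_prop
    have hne : ∀ p : Set.Icc s kz × ℝ, Real.sqrt (1 - ((p.1:ℝ))^2 * sin p.2^2) ≠ 0 :=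
      fun p => ne_of_gt (Real.sqrt_pos.2 (upos (hsq p.1) p.2))
    exact ((continuous_const.mul hc.sqrt).sub (continuous_const.div hc.sqrt hne))
  have : (Set.Icc s kz).restrict (fun k : ℝ => 2 * ellE k - ellK k)
      = fun x : Set.Icc s kz =>
        ∫ θ in (0:ℝ)..(π/2),
          (2 * Real.sqrt (1 - (x:ℝ)^2 * sin θ^2) - 1 / Real.sqrt (1 - (x:ℝ)^2 * sin θ^2)) := by
    funext x
    exact fint (hsq x)
  change Continuous ((Set.Icc s kz).restrict fun k : ℝ => 2 * ellE k - ellK k); rw [this]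
  exact key

theorem twoE_minus_K_monotone_zero :
    StrictAntiOn (fun k : ℝ => 2 * ellE k - ellK k) (Set.Ioo 0 1)
      ∧ (∃ ε > (0:ℝ), ∀ k ∈ Set.Ioo (0:ℝ) ε, 0 < 2 * ellE k - ellK k)
      ∧ (∃! kstar : ℝ, kstar ∈ Set.Ioo (1 / Real.sqrt 2) 1
            ∧ 2 * ellE kstar - ellK kstar = 0) := by
  refine ⟨fanti, ⟨1 / Real.sqrt 2, s_pos, ?_⟩, ?_⟩
  · rintro k ⟨hk0, hk1⟩
    apply fpos
    rw [← s_sq]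
    nlinarith [s_pos]
  · set s := 1 / Real.sqrt 2 with hs
    have hfs : 0 < 2 * ellE s - ellK s := fpos (le_of_eq s_sq)
    have hfz : 2 * ellE kz - ellK kz < 0 := fneg
    have hmem : (0:ℝ) ∈ Set.Icc (2 * ellE kz - ellK kz) (2 * ellE s - ellK s) :=
      ⟨hfz.le, hfs.le⟩
    obtain ⟨kstar, hkmem, hkval⟩ :=
      intermediate_value_Icc' s_lt_kz.le fcont hmem
    have hkval : 2 * ellE kstar - ellK kstar = 0 := hkval
    have hks : s < kstar := by
      rcases lt_or_eq_of_le hkmem.1 with h | h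
      · exact h
      · exfalso; rw [← h] at hkval; linarith
    have hkz : kstar < kz := by
      rcases lt_or_eq_of_le hkmem.2 with h | h
      · exact h
      · exfalso; rw [h] at hkval; linarith
    refine ⟨kstar, ⟨⟨hks, lt_trans hkz kz_lt_one⟩, hkval⟩, ?_⟩
    rintro y ⟨⟨hy1, hy2⟩, hyval⟩
    have hy01 : y ∈ Set.Ioo (0:ℝ) 1 := ⟨lt_trans s_pos hy1, hy2⟩
    have hk01 : kstar ∈ Set.Ioo (0:ℝ) 1 := ⟨lt_trans s_pos hks, lt_trans hkz kz_lt_one⟩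
    exact fanti.injOn hy01 hk01 (by show 2 * ellE y - ellK y = 2 * ellE kstar - ellK kstar; rw [hyval, hkval])
end

section
/- For fixed L > 0, the function k ↦ ω(k) = L²/(16 K(k)² (2k² − 1)) maps (1/√2, 1) onto (0, ∞), is strictly decreasing, and in particular ω(k) ∈ (0,1) if and only if L < 4K(k)√(2k²−1). -/
open Real

lemma integrand_pos {k : ℝ} (hk : k ^ 2 < 1) (θ : ℝ) : 0 < 1 - k ^ 2 * Real.sin θ ^ 2 := by
  nlinarith [Real.sin_sq_le_one θ, sq_nonneg k, sq_nonneg (Real.sin θ)]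

lemma integrand_cont {k : ℝ} (hk : k ^ 2 < 1) :
    Continuous fun θ : ℝ => 1 / Real.sqrt (1 - k ^ 2 * Real.sin θ ^ 2) := by
  apply continuous_const.div
  · exact (continuous_const.sub ((continuous_const.mul ((Real.continuous_sin).pow 2)))).sqrt
  · intro θ
    exact ne_of_gt (Real.sqrt_pos.mpr (integrand_pos hk θ))

lemma integrand_intble {k : ℝ} (hk : k ^ 2 < 1) :
    IntervalIntegrable (fun θ : ℝ => 1 / Real.sqrt (1 - k ^ 2 * Real.sin θ ^ 2))
      MeasureTheory.volume 0 (π / 2) :=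
  (integrand_cont hk).intervalIntegrable _ _

lemma ellK_lower {k : ℝ} (hk : k ^ 2 < 1) : π / 2 ≤ ellK k := by
  have h := intervalIntegral.integral_mono_on (a := (0:ℝ)) (b := π/2) (f := fun _ => (1:ℝ))
    (g := fun θ : ℝ => 1 / Real.sqrt (1 - k ^ 2 * Real.sin θ ^ 2))
    (by positivity) (intervalIntegrable_const) (integrand_intble hk) ?_
  · simpa [ellK, one_div] using h
  · intro θ _
    rw [le_div_iff₀ (Real.sqrt_pos.mpr (integrand_pos hk θ)), one_mul]
    apply Real.sqrt_le_one.mpr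
    nlinarith [sq_nonneg k, sq_nonneg (Real.sin θ)]

lemma ellK_pos {k : ℝ} (hk : k ^ 2 < 1) : 0 < ellK k :=
  lt_of_lt_of_le (by positivity) (ellK_lower hk)

lemma ellK_upper {k : ℝ} (hk : k ^ 2 < 1) :
    ellK k ≤ π / 2 / Real.sqrt (1 - k ^ 2) := by
  have h1k : (0:ℝ) < 1 - k ^ 2 := by linarith
  have h := intervalIntegral.integral_mono_on (a := (0:ℝ)) (b := π/2)
    (f := fun θ : ℝ => 1 / Real.sqrt (1 - k ^ 2 * Real.sin θ ^ 2))
    (g := fun _ : ℝ => 1 / Real.sqrt (1 - k ^ 2))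
    (by positivity) (integrand_intble hk) (intervalIntegrable_const) ?_
  · simpa [ellK, one_div, div_eq_mul_inv] using h
  · intro θ _
    apply one_div_le_one_div_of_le (Real.sqrt_pos.mpr h1k)
    apply Real.sqrt_le_sqrt
    nlinarith [Real.sin_sq_le_one θ, sq_nonneg k]

lemma ellK_log_lower {k : ℝ} (hk0 : 0 ≤ k) (hk : k ^ 2 < 1) :
    Real.log (Real.sqrt (1 - k ^ 2) + π / 2) - Real.log (Real.sqrt (1 - k ^ 2)) ≤ ellK k := by
  set a : ℝ := Real.sqrt (1 - k ^ 2) with ha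
  have h1k : (0:ℝ) < 1 - k ^ 2 := by linarith
  have hapos : 0 < a := Real.sqrt_pos.mpr h1k
  have ha2 : a ^ 2 = 1 - k ^ 2 := Real.sq_sqrt h1k.le
  have key : ∀ θ ∈ Set.Icc (0:ℝ) (π/2),
      1 / (a + (π / 2 - θ)) ≤ 1 / Real.sqrt (1 - k ^ 2 * Real.sin θ ^ 2) := by
    intro θ hθ
    obtain ⟨hθ0, hθ1⟩ := hθ
    have hpos : 0 < a + (π / 2 - θ) := by linarith
    have hcos : Real.cos θ ≤ π / 2 - θ := by
      rw [← Real.sin_pi_div_two_sub]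
      exact Real.sin_le (by linarith)
    have hcos0 : 0 ≤ Real.cos θ := Real.cos_nonneg_of_mem_Icc ⟨by linarith, by linarith⟩
    have hsq : 1 - k ^ 2 * Real.sin θ ^ 2 ≤ (a + (π / 2 - θ)) ^ 2 := by
      have hs : Real.sin θ ^ 2 + Real.cos θ ^ 2 = 1 := Real.sin_sq_add_cos_sq θ
      nlinarith [sq_nonneg (Real.sin θ), sq_nonneg k, mul_nonneg hapos.le (sub_nonneg.mpr hθ1),
        sq_nonneg (Real.cos θ)]
    apply one_div_le_one_div_of_le (Real.sqrt_pos.mpr (integrand_pos hk θ))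
    calc Real.sqrt (1 - k ^ 2 * Real.sin θ ^ 2) ≤ Real.sqrt ((a + (π/2 - θ))^2) :=
          Real.sqrt_le_sqrt hsq
      _ = a + (π/2 - θ) := Real.sqrt_sq hpos.le
  have hderiv : ∀ θ ∈ Set.uIcc (0:ℝ) (π/2),
      HasDerivAt (fun t : ℝ => -Real.log (a + (π/2 - t))) (1 / (a + (π/2 - θ))) θ := by
    intro θ hθ
    rw [Set.uIcc_of_le (by positivity)] at hθ
    have hpos : 0 < a + (π / 2 - θ) := by
      obtain ⟨_, h2⟩ := hθ; linarith
    have h1 : HasDerivAt (fun t : ℝ => a + (π/2 - t)) (-1) θ := by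
      rw [show (fun t : ℝ => a + (π/2 - t)) = fun t : ℝ => (a + π/2) - t from
        funext fun t => by ring]
      exact (hasDerivAt_id θ).const_sub (a + π/2)
    have h2 := ((Real.hasDerivAt_log hpos.ne').comp θ h1).neg
    convert h2 using 1
    exacts [rfl, rfl, rfl, by ring]
  have hcont : ContinuousOn (fun θ : ℝ => 1 / (a + (π/2 - θ))) (Set.uIcc (0:ℝ) (π/2)) := by
    apply ContinuousOn.div continuousOn_const
    · fun_prop
    · intro θ hθ
      rw [Set.uIcc_of_le (by positivity)] at hθ
      obtain ⟨_, h2⟩ := hθ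
      have : 0 < a + (π/2 - θ) := by linarith
      exact this.ne'
  have hint : IntervalIntegrable (fun θ : ℝ => 1 / (a + (π/2 - θ)))
      MeasureTheory.volume 0 (π/2) := hcont.intervalIntegrable
  have hval : ∫ θ in (0:ℝ)..(π/2), 1 / (a + (π/2 - θ)) =
      Real.log (a + π/2) - Real.log a := by
    rw [intervalIntegral.integral_eq_sub_of_hasDerivAt hderiv hint]
    simp only [sub_self, sub_zero]
    ring
  calc Real.log (a + π/2) - Real.log a = _ := hval.symm
    _ ≤ ellK k := intervalIntegral.integral_mono_on (by positivity) hint (integrand_intble hk) key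

lemma ellK_strictMono {k1 k2 : ℝ} (h0 : 0 ≤ k1) (h12 : k1 < k2) (h2 : k2 ^ 2 < 1) :
    ellK k1 < ellK k2 := by
  have h1 : k1 ^ 2 < 1 := by nlinarith
  have hsub : 0 < ∫ θ in (0:ℝ)..(π/2),
      (1 / Real.sqrt (1 - k2 ^ 2 * Real.sin θ ^ 2) -
        1 / Real.sqrt (1 - k1 ^ 2 * Real.sin θ ^ 2)) := by
    apply intervalIntegral.intervalIntegral_pos_of_pos_on
      (((integrand_cont h2).sub (integrand_cont h1)).intervalIntegrable _ _)
    · intro θ hθ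
      obtain ⟨hθ0, hθ1⟩ := hθ
      have hs : 0 < Real.sin θ := Real.sin_pos_of_pos_of_lt_pi hθ0 (by
        have := Real.pi_pos; linarith)
      have hlt : 1 - k2 ^ 2 * Real.sin θ ^ 2 < 1 - k1 ^ 2 * Real.sin θ ^ 2 := by
        have hss : 0 < Real.sin θ ^ 2 := by positivity
        have hkk : k1 ^ 2 < k2 ^ 2 := by nlinarith
        nlinarith [mul_lt_mul_of_pos_right hkk hss]
      have := integrand_pos h2 θ
      rw [Pi.sub_apply, sub_pos]
      apply one_div_lt_one_div_of_lt (Real.sqrt_pos.mpr this)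
      exact Real.sqrt_lt_sqrt this.le hlt
    · positivity
  have := intervalIntegral.integral_sub (integrand_intble h2) (integrand_intble h1)
  rw [this] at hsub
  unfold ellK
  linarith

lemma ellK_continuousAt {k0 : ℝ} (h0 : 0 < k0) (h1 : k0 < 1) : ContinuousAt ellK k0 := by
  set b : ℝ := (1 + k0) / 2 with hb
  have hb1 : b < 1 := by rw [hb]; linarith
  have hbk : k0 < b := by rw [hb]; linarith
  have hb0 : 0 < b := by rw [hb]; linarith
  set c : ℝ := 1 - b ^ 2 with hc
  have hc0 : 0 < c := by rw [hc]; nlinarith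
  set F : ℝ → ℝ → ℝ := fun x θ => 1 / Real.sqrt (max (1 - x ^ 2 * Real.sin θ ^ 2) c) with hF
  have hFc : Continuous (Function.uncurry F) := by
    apply continuous_const.div
    · apply Continuous.sqrt
      apply Continuous.max
      · fun_prop
      · exact continuous_const
    · intro p
      have : 0 < max (1 - p.1 ^ 2 * Real.sin p.2 ^ 2) c := lt_max_of_lt_right hc0
      exact ne_of_gt (Real.sqrt_pos.mpr this)
  have hg : Continuous fun x => ∫ θ in (0:ℝ)..(π/2), F x θ :=
    intervalIntegral.continuous_parametric_intervalIntegral_of_continuous' hFc 0 (π/2)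
  have heq : ellK =ᶠ[nhds k0] fun x => ∫ θ in (0:ℝ)..(π/2), F x θ := by
    have hmem : Set.Ioo (-b) b ∈ nhds k0 := (isOpen_Ioo).mem_nhds ⟨by linarith, hbk⟩
    filter_upwards [hmem] with x hx
    obtain ⟨hx1, hx2⟩ := hx
    have hx2' : x ^ 2 < b ^ 2 := by nlinarith [abs_lt.mpr ⟨hx1, hx2⟩, sq_abs x]
    unfold ellK
    apply intervalIntegral.integral_congr
    intro θ _
    have hmax : max (1 - x ^ 2 * Real.sin θ ^ 2) c = 1 - x ^ 2 * Real.sin θ ^ 2 := by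
      apply max_eq_left
      rw [hc]
      nlinarith [Real.sin_sq_le_one θ, sq_nonneg x]
    rw [hF]; simp only [hmax]
  exact hg.continuousAt.congr heq.symm

lemma mem_D {k : ℝ} (h : k ∈ Set.Ioo (1 / Real.sqrt 2) 1) :
    0 < k ∧ 1/2 < k ^ 2 ∧ k ^ 2 < 1 := by
  obtain ⟨h1, h2⟩ := h
  have hs : (0:ℝ) < Real.sqrt 2 := Real.sqrt_pos.mpr (by norm_num)
  have hinv : (1 / Real.sqrt 2) ^ 2 = 1 / 2 := by
    rw [div_pow, one_pow, Real.sq_sqrt (by norm_num : (0:ℝ) ≤ 2)]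
  have hk0 : 0 < k := lt_trans (by positivity) h1
  refine ⟨hk0, ?_, ?_⟩
  · calc (1:ℝ)/2 = (1 / Real.sqrt 2) ^ 2 := hinv.symm
      _ < k ^ 2 := by
        apply pow_lt_pow_left₀ h1 (by positivity)
        norm_num
  · nlinarith

set_option maxHeartbeats 1000000 in
theorem KG_frequency_map (L : ℝ) (hL : 0 < L) :
    ((fun k : ℝ => L ^ 2 / (16 * ellK k ^ 2 * (2 * k ^ 2 - 1))) ''
        Set.Ioo (1 / Real.sqrt 2) 1 = Set.Ioi 0)
      ∧ StrictAntiOn (fun k : ℝ => L ^ 2 / (16 * ellK k ^ 2 * (2 * k ^ 2 - 1)))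
          (Set.Ioo (1 / Real.sqrt 2) 1)
      ∧ ∀ k ∈ Set.Ioo (1 / Real.sqrt 2) 1,
          (L ^ 2 / (16 * ellK k ^ 2 * (2 * k ^ 2 - 1)) ∈ Set.Ioo (0:ℝ) 1
            ↔ L < 4 * ellK k * Real.sqrt (2 * k ^ 2 - 1)) := by
  set D := Set.Ioo (1 / Real.sqrt 2) (1:ℝ) with hD
  set f : ℝ → ℝ := fun k => L ^ 2 / (16 * ellK k ^ 2 * (2 * k ^ 2 - 1)) with hf
  have hdpos : ∀ k ∈ D, 0 < 16 * ellK k ^ 2 * (2 * k ^ 2 - 1) := by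
    intro k hk
    obtain ⟨hk0, hk1, hk2⟩ := mem_D hk
    have hK := ellK_pos hk2
    have hm : 0 < 2 * k ^ 2 - 1 := by linarith
    positivity
  have hfpos : ∀ k ∈ D, 0 < f k := fun k hk => div_pos (by positivity) (hdpos k hk)
  -- strict antitonicity
  have hanti : StrictAntiOn f D := by
    intro k1 hk1 k2 hk2 h12
    obtain ⟨hk10, hk11, hk12⟩ := mem_D hk1
    obtain ⟨hk20, hk21, hk22⟩ := mem_D hk2
    have hK1 : 0 < ellK k1 := ellK_pos hk12
    have hKlt : ellK k1 < ellK k2 := ellK_strictMono hk10.le h12 hk22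
    have hm1 : 0 < 2 * k1 ^ 2 - 1 := by linarith
    have hm2 : 2 * k1 ^ 2 - 1 < 2 * k2 ^ 2 - 1 := by nlinarith
    apply div_lt_div_of_pos_left (pow_pos hL 2) (hdpos k1 hk1)
    have hKsq : ellK k1 ^ 2 < ellK k2 ^ 2 := by nlinarith
    nlinarith [mul_lt_mul_of_pos_right hKsq hm1,
      mul_lt_mul_of_pos_left hm2 (by nlinarith [ellK_pos hk22] : (0:ℝ) < 16 * ellK k2 ^ 2)]
  -- continuity of f on D
  have hfcont : ContinuousOn f D := by
    apply ContinuousOn.div continuousOn_const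
    · apply ContinuousOn.mul
      · apply ContinuousOn.mul continuousOn_const
        apply ContinuousOn.pow
        intro k hk
        obtain ⟨hk0, _, hk2⟩ := mem_D hk
        exact (ellK_continuousAt hk0 (by nlinarith)).continuousWithinAt
      · fun_prop
    · intro k hk
      exact (hdpos k hk).ne'
  -- image
  have himage : f '' D = Set.Ioi 0 := by
    apply Set.Subset.antisymm
    · rintro y ⟨k, hk, rfl⟩
      exact hfpos k hk
    · intro y hy
      rw [Set.mem_Ioi] at hy
      -- a point where f is large
      set η : ℝ := min (1/8) (L ^ 2 / (64 * π ^ 2 * y)) with hη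
      have hπ := Real.pi_pos
      have hη0 : 0 < η := lt_min (by norm_num) (by positivity)
      have hη8 : η ≤ 1/8 := min_le_left _ _
      have hηy : η ≤ L ^ 2 / (64 * π ^ 2 * y) := min_le_right _ _
      set k1 : ℝ := Real.sqrt (1/2 + η) with hk1def
      have hk1D : k1 ∈ D := by
        constructor
        · have : (1:ℝ) / Real.sqrt 2 = Real.sqrt (1/2) := by
            rw [one_div, show (1:ℝ)/2 = 2⁻¹ by norm_num, Real.sqrt_inv]
          rw [this, hk1def]
          exact Real.sqrt_lt_sqrt (by norm_num) (by linarith)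
        · calc k1 = Real.sqrt (1/2 + η) := hk1def
            _ < Real.sqrt 1 := Real.sqrt_lt_sqrt (by positivity) (by linarith)
            _ = 1 := Real.sqrt_one
      have hk1sq : k1 ^ 2 = 1/2 + η := Real.sq_sqrt (by positivity)
      obtain ⟨hk10, hk11, hk12⟩ := mem_D hk1D
      have hK1pos : 0 < ellK k1 := ellK_pos hk12
      -- K1^2 * (1/2 - η) ≤ π^2/4
      have ha1 : Real.sqrt (1 - k1 ^ 2) ^ 2 = 1/2 - η := by
        rw [Real.sq_sqrt (by rw [hk1sq]; linarith)]
        rw [hk1sq]; ring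
      have hK1up : ellK k1 ≤ π / 2 / Real.sqrt (1 - k1 ^ 2) := ellK_upper hk12
      have ha1pos : 0 < Real.sqrt (1 - k1 ^ 2) := by
        apply Real.sqrt_pos.mpr; rw [hk1sq]; linarith
      have hK1a : ellK k1 * Real.sqrt (1 - k1 ^ 2) ≤ π / 2 := by
        rw [← le_div_iff₀ ha1pos]; exact hK1up
      have hK1sq : ellK k1 ^ 2 * (1/2 - η) ≤ π ^ 2 / 4 := by
        have := mul_le_mul hK1a hK1a (by positivity) (by positivity)
        calc ellK k1 ^ 2 * (1/2 - η) = (ellK k1 * Real.sqrt (1 - k1 ^ 2)) *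
              (ellK k1 * Real.sqrt (1 - k1 ^ 2)) := by rw [← ha1]; ring
          _ ≤ (π/2) * (π/2) := this
          _ = π ^ 2 / 4 := by ring
      have hK1b : ellK k1 ^ 2 ≤ 2 * π ^ 2 / 3 := by nlinarith [sq_nonneg (ellK k1)]
      have hyL : y * η * (64 * π ^ 2) ≤ L ^ 2 := by
        have h64 : (0:ℝ) < 64 * π ^ 2 * y := by positivity
        have := (le_div_iff₀ h64).mp hηy
        nlinarith
      have hfk1 : y < f k1 := by
        rw [hf]
        rw [lt_div_iff₀ (hdpos k1 hk1D)]
        have h2k : 2 * k1 ^ 2 - 1 = 2 * η := by rw [hk1sq]; ring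
        rw [h2k]
        have hL2 : 0 < L ^ 2 := by positivity
        have h1 : y * (16 * ellK k1 ^ 2 * (2 * η)) = 32 * (y * η) * ellK k1 ^ 2 := by ring
        have h2 : 32 * (y * η) * ellK k1 ^ 2 ≤ 32 * (y * η) * (2 * π ^ 2 / 3) :=
          mul_le_mul_of_nonneg_left hK1b (by positivity)
        have h3 : 32 * (y * η) * (2 * π ^ 2 / 3) = (y * η * (64 * π ^ 2)) / 3 := by ring
        rw [h1]
        calc 32 * (y * η) * ellK k1 ^ 2 ≤ (y * η * (64 * π ^ 2)) / 3 := by rw [← h3]; exact h2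
          _ ≤ L ^ 2 / 3 := by linarith
          _ < L ^ 2 := by linarith
      -- a point where f is small
      set t : ℝ := max 2 (L ^ 2 / (2 * y) + 1) with ht
      have ht2 : (2:ℝ) ≤ t := le_max_left _ _
      have htL : L ^ 2 / (2 * y) + 1 ≤ t := le_max_right _ _
      set δ : ℝ := Real.exp (-t) with hδdef
      have hδ0 : 0 < δ := Real.exp_pos _
      have hδ4 : δ < 1/4 := by
        have h1 : δ ≤ Real.exp (-2) := Real.exp_le_exp.mpr (by linarith)
        have h2 : Real.exp (-2 : ℝ) = 1 / Real.exp 2 := by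
          rw [Real.exp_neg]; ring
        have h3 : (4:ℝ) < Real.exp 2 := by
          have he : (2.7182818283 : ℝ) < Real.exp 1 := Real.exp_one_gt_d9
          have : Real.exp 2 = Real.exp 1 * Real.exp 1 := by
            rw [← Real.exp_add]; norm_num
          nlinarith
        have h4 : 1 / Real.exp 2 < 1/4 := by
          rw [div_lt_div_iff₀ (by positivity) (by norm_num)]
          linarith
        linarith [h1, h2 ▸ (le_of_eq h2.symm)]
      set k2 : ℝ := Real.sqrt (1 - δ) with hk2def
      have hk2sq : k2 ^ 2 = 1 - δ := Real.sq_sqrt (by linarith)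
      have hk2D : k2 ∈ D := by
        constructor
        · have : (1:ℝ) / Real.sqrt 2 = Real.sqrt (1/2) := by
            rw [one_div, show (1:ℝ)/2 = 2⁻¹ by norm_num, Real.sqrt_inv]
          rw [this, hk2def]
          exact Real.sqrt_lt_sqrt (by norm_num) (by linarith)
        · calc k2 = Real.sqrt (1 - δ) := hk2def
            _ < Real.sqrt 1 := Real.sqrt_lt_sqrt (by linarith) (by linarith)
            _ = 1 := Real.sqrt_one
      obtain ⟨hk20, hk21, hk22⟩ := mem_D hk2D
      have hK2pos : 0 < ellK k2 := ellK_pos hk22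
      -- lower bound on ellK k2
      have ha2 : Real.sqrt (1 - k2 ^ 2) = Real.sqrt δ := by rw [hk2sq]; congr 1; ring
      have hlogδ : Real.log (Real.sqrt δ) = -t / 2 := by
        rw [Real.log_sqrt hδ0.le, hδdef, Real.log_exp]
      have hK2low : t / 2 ≤ ellK k2 := by
        have h := ellK_log_lower hk20.le hk22
        rw [ha2, hlogδ] at h
        have hge1 : (1:ℝ) ≤ Real.sqrt δ + π / 2 := by
          have := Real.pi_gt_three
          have := Real.sqrt_nonneg δ
          linarith
        have hlognn : 0 ≤ Real.log (Real.sqrt δ + π / 2) := Real.log_nonneg hge1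
        linarith
      have hfk2 : f k2 < y := by
        rw [hf]
        rw [div_lt_iff₀ (hdpos k2 hk2D)]
        have h2k : 2 * k2 ^ 2 - 1 = 1 - 2 * δ := by rw [hk2sq]; ring
        have hm : (1:ℝ)/2 ≤ 2 * k2 ^ 2 - 1 := by rw [h2k]; linarith
        have hKsq : t ^ 2 / 4 ≤ ellK k2 ^ 2 := by
          nlinarith [mul_le_mul hK2low hK2low (by linarith) hK2pos.le]
        have hty : L ^ 2 < 2 * t * y := by
          have h := (div_le_iff₀ (show (0:ℝ) < 2 * y by positivity)).mp
            (by linarith : L ^ 2 / (2 * y) ≤ t - 1)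
          have : (t - 1) * (2 * y) = 2 * t * y - 2 * y := by ring
          linarith
        have htt : t ≤ t ^ 2 := by nlinarith
        have hd2 : 2 * t ^ 2 ≤ 16 * ellK k2 ^ 2 * (2 * k2 ^ 2 - 1) := by
          calc 2 * t ^ 2 = 16 * (t ^ 2 / 4) * (1/2) := by ring
            _ ≤ 16 * ellK k2 ^ 2 * (2 * k2 ^ 2 - 1) := by
                apply mul_le_mul (by linarith) hm (by norm_num) (by positivity)
        have h5 : 2 * t ^ 2 * y ≤ 16 * ellK k2 ^ 2 * (2 * k2 ^ 2 - 1) * y :=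
          mul_le_mul_of_nonneg_right hd2 hy.le
        have h6 : 2 * t * y ≤ 2 * t ^ 2 * y :=
          mul_le_mul_of_nonneg_right (by linarith : 2 * t ≤ 2 * t ^ 2) hy.le
        calc L ^ 2 < 2 * t * y := hty
          _ ≤ 16 * ellK k2 ^ 2 * (2 * k2 ^ 2 - 1) * y := le_trans h6 h5
          _ = y * (16 * ellK k2 ^ 2 * (2 * k2 ^ 2 - 1)) := mul_comm _ _
      -- conclude via connectedness
      have hpre : IsPreconnected (f '' D) := (isPreconnected_Ioo).image f hfcont
      have hord := hpre.ordConnected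
      exact hord.out (Set.mem_image_of_mem f hk2D) (Set.mem_image_of_mem f hk1D)
        ⟨hfk2.le, hfk1.le⟩
  refine ⟨himage, hanti, ?_⟩
  intro k hk
  obtain ⟨hk0, hk1, hk2⟩ := mem_D hk
  have hK : 0 < ellK k := ellK_pos hk2
  have hm : 0 < 2 * k ^ 2 - 1 := by linarith
  have hsq : Real.sqrt (2 * k ^ 2 - 1) ^ 2 = 2 * k ^ 2 - 1 := Real.sq_sqrt hm.le
  have hsqpos : 0 < Real.sqrt (2 * k ^ 2 - 1) := Real.sqrt_pos.mpr hm
  have hd : 0 < 16 * ellK k ^ 2 * (2 * k ^ 2 - 1) := hdpos k hk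
  constructor
  · rintro ⟨-, hlt⟩
    rw [div_lt_one hd] at hlt
    nlinarith [sq_nonneg (L - 4 * ellK k * Real.sqrt (2 * k ^ 2 - 1)),
      mul_pos (mul_pos (by norm_num : (0:ℝ) < 4) hK) hsqpos]
  · intro hlt
    refine ⟨hfpos k hk, ?_⟩
    rw [div_lt_one hd]
    nlinarith [mul_pos (mul_pos (by norm_num : (0:ℝ) < 4) hK) hsqpos]
end

section
/- Let H be a real Hilbert space, L a self-adjoint operator with spectral decomposition H = span{Ψ} ⊕ span{φ'} ⊕ P, where LΨ = −λ²Ψ with λ ≠ 0, ‖Ψ‖ = 1, Lφ' = 0, and (Lu,u) ≥ δ‖u‖² on P for some δ > 0. Suppose χ ∈ H satisfies (Lχ, χ) < 0, write χ = a₀Ψ + b₀φ' + p₀ with p₀ ∈ P, and let v ∈ H satisfy (Lχ, v) = 0 and v ∉ span{φ'}. Then (Lv, v) > 0. -/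
set_option maxHeartbeats 1000000


theorem abstract_positivity_lemma
    {H : Type*} [NormedAddCommGroup H] [InnerProductSpace ℝ H]
    (T : H →ₗ[ℝ] H)
    (hsym : ∀ x y : H, inner ℝ (T x) y = (inner ℝ x (T y) : ℝ))
    (Ψ φ' : H) (P : Submodule ℝ H) (lam δ : ℝ)
    (hlam : lam ≠ 0) (hΨnorm : ‖Ψ‖ = 1)
    (hTΨ : T Ψ = (-(lam ^ 2)) • Ψ)
    (hTφ' : T φ' = 0) (hφ'ne : φ' ≠ 0)
    (hδ : 0 < δ)
    (hpos : ∀ p ∈ P, δ * ‖p‖ ^ 2 ≤ (inner ℝ (T p) p : ℝ))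
    (hdecomp : ∀ x : H, ∃ a b : ℝ, ∃ p ∈ P, x = a • Ψ + b • φ' + p)
    (hΨφ' : (inner ℝ Ψ φ' : ℝ) = 0)
    (hΨP : ∀ p ∈ P, (inner ℝ Ψ p : ℝ) = 0)
    (hφ'P : ∀ p ∈ P, (inner ℝ φ' p : ℝ) = 0)
    (χ : H) (hχneg : (inner ℝ (T χ) χ : ℝ) < 0)
    (a₀ b₀ : ℝ) (p₀ : H) (hp₀ : p₀ ∈ P)
    (hχdecomp : χ = a₀ • Ψ + b₀ • φ' + p₀)
    (v : H) (horth : (inner ℝ (T χ) v : ℝ) = 0)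
    (hv : v ∉ Submodule.span ℝ ({φ'} : Set H)) :
    0 < (inner ℝ (T v) v : ℝ) := by
  have hΨΨ : (inner ℝ Ψ Ψ : ℝ) = 1 := by
    rw [real_inner_self_eq_norm_sq, hΨnorm]; norm_num
  have hTPΨ : ∀ p ∈ P, (inner ℝ (T p) Ψ : ℝ) = 0 := by
    intro p hp
    rw [hsym, hTΨ, real_inner_smul_right, real_inner_comm, hΨP p hp, mul_zero]
  have hTPφ' : ∀ p ∈ P, (inner ℝ (T p) φ' : ℝ) = 0 := by
    intro p hp
    rw [hsym, hTφ', inner_zero_right]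
  have key : ∀ (a b : ℝ) (p : H), p ∈ P → ∀ (c d : ℝ) (q : H), q ∈ P →
      (inner ℝ (T (a • Ψ + b • φ' + p)) (c • Ψ + d • φ' + q) : ℝ)
        = -(lam ^ 2) * (a * c) + inner ℝ (T p) q := by
    intro a b p hp c d q hq
    simp only [map_add, map_smul, hTΨ, hTφ', smul_zero, add_zero, smul_smul,
      inner_add_left, inner_add_right, real_inner_smul_left, real_inner_smul_right,
      hΨφ', hΨP q hq, hΨP p hp, hφ'P q hq, hTPΨ p hp, hTPφ' p hp, hΨΨ]
    ring_nf
  obtain ⟨a, b, p, hp, hvdec⟩ := hdecomp v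
  have hχχ : (inner ℝ (T χ) χ : ℝ) = -(lam ^ 2) * (a₀ * a₀) + inner ℝ (T p₀) p₀ := by
    rw [hχdecomp]; exact key a₀ b₀ p₀ hp₀ a₀ b₀ p₀ hp₀
  have hχv : (0 : ℝ) = -(lam ^ 2) * (a₀ * a) + inner ℝ (T p₀) p := by
    rw [← horth, hχdecomp, hvdec]; exact key a₀ b₀ p₀ hp₀ a b p hp
  have hvv : (inner ℝ (T v) v : ℝ) = -(lam ^ 2) * (a * a) + inner ℝ (T p) p := by
    rw [hvdec]; exact key a b p hp a b p hp
  set c₀ : ℝ := (inner ℝ (T p₀) p₀ : ℝ) with hc₀def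
  set c : ℝ := inner ℝ (T p) p with hcdef
  set m : ℝ := inner ℝ (T p₀) p with hmdef
  have hc₀0 : 0 ≤ c₀ := le_trans (by positivity) (hpos p₀ hp₀)
  have hc0 : 0 ≤ c := le_trans (by positivity) (hpos p hp)
  have hlam2 : 0 < lam ^ 2 := by positivity
  have ha₀ : a₀ ≠ 0 := by
    intro h
    rw [hχχ, h] at hχneg
    nlinarith
  rcases eq_or_lt_of_le hc0 with hc | hc
  · -- c = 0 ⇒ p = 0 ⇒ a = 0 ⇒ v ∈ span φ', contradiction
    have hp0 : p = 0 := by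
      have := hpos p hp
      rw [← hcdef, ← hc] at this
      have hn : ‖p‖ ^ 2 = 0 := le_antisymm (by nlinarith) (sq_nonneg _)
      have := pow_eq_zero_iff (n := 2) (by norm_num) |>.1 hn
      exact norm_eq_zero.1 this
    have hm0 : m = 0 := by rw [hmdef, hp0, inner_zero_right]
    have ha : a = 0 := by
      rw [hm0] at hχv
      have := hχv
      have h2 : lam ^ 2 * (a₀ * a) = 0 := by linarith
      rcases mul_eq_zero.1 h2 with h | h
      · exact absurd h (ne_of_gt hlam2)
      · rcases mul_eq_zero.1 h with h | h
        · exact absurd h ha₀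
        · exact h
    exfalso
    apply hv
    rw [hvdec, ha, hp0]
    simp [Submodule.mem_span_singleton]
  · -- Cauchy–Schwarz for the form on P
    have hTpp₀ : (inner ℝ (T p) p₀ : ℝ) = m := by
      rw [hsym, real_inner_comm]
    have hCS : m ^ 2 ≤ c₀ * c := by
      have hmem : c • p₀ + (-m) • p ∈ P := P.add_mem (P.smul_mem c hp₀) (P.smul_mem (-m) hp)
      have hexp : (inner ℝ (T (c • p₀ + (-m) • p)) (c • p₀ + (-m) • p) : ℝ)
          = c * (c₀ * c - m ^ 2) := by
        simp only [map_add, map_smul, inner_add_left, inner_add_right,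
          real_inner_smul_left, real_inner_smul_right, ← hc₀def, ← hcdef, ← hmdef, hTpp₀]
        ring
      have h0 : (0 : ℝ) ≤ c * (c₀ * c - m ^ 2) := by
        rw [← hexp]
        exact le_trans (by positivity) (hpos _ hmem)
      nlinarith [h0, hc]
    clear_value c₀ c m
    have h1 : c₀ < lam ^ 2 * (a₀ * a₀) := by nlinarith [hχχ, hχneg]
    have hm : m = lam ^ 2 * (a₀ * a) := by linarith [hχv]
    have hk : 0 < lam ^ 2 * a₀ ^ 2 := by positivity
    have hmsq : lam ^ 2 * a₀ ^ 2 * (lam ^ 2 * (a * a)) = m ^ 2 := by rw [hm]; ring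
    have h1c : c₀ * c < lam ^ 2 * a₀ ^ 2 * c := by
      have h6 := mul_lt_mul_of_pos_right h1 hc
      nlinarith [h6]
    have h4 : m ^ 2 < lam ^ 2 * a₀ ^ 2 * c := lt_of_le_of_lt hCS h1c
    have h3 : lam ^ 2 * a₀ ^ 2 * (lam ^ 2 * (a * a)) < lam ^ 2 * a₀ ^ 2 * c := by rw [hmsq]; exact h4
    have h5 := lt_of_mul_lt_mul_left h3 (le_of_lt hk)
    rw [hvv]
    linarith
end
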